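/- Let R be an N×N Hermitian matrix and Q an N×N Hermitian positive definite matrix over ℂ. Define f(A) = tr(R) − tr(A R) − tr(R A^H) + tr(A Q A^H) for A ∈ ℂ^{N×N}. Then f attains its minimum uniquely at A = R Q^{-1}, and the minimum value is f(R Q^{-1}) = tr(R − R Q^{-1} R). -/

import Mathlib

/-!
Completing the square: with `M = R Q⁻¹` one has `Mᴴ = Q⁻¹ R`, so `M Q = R` and `Q Mᴴ = R`, whence
`f(A) = tr(R − R Q⁻¹ R) + tr((A − M) Q (A − M)ᴴ)`. The last trace is positive for `A ≠ M`, being a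
sum of values `xᴴ Q x` of the positive definite form of `Q` at the (conjugated) rows of `A − M`.
-/

open Matrix ComplexOrder

namespace Matrix

variable {m n α 𝕜 : Type*} [Fintype m] [Fintype n]

lemma PosDef.trace_mul_mul_conjTranspose_pos [RCLike 𝕜] {Q : Matrix n n 𝕜} (hQ : Q.PosDef)
    {B : Matrix m n 𝕜} (hB : B ≠ 0) : 0 < (B * Q * Bᴴ).trace := by
  have diag_eq (k : m) : (B * Q * Bᴴ).diag k = star (star (B k)) ⬝ᵥ Q *ᵥ star (B k) := by
    rw [diag_apply, mul_apply', dotProduct_mulVec, star_star]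
    rfl
  obtain ⟨k, hk⟩ : ∃ k, B k ≠ 0 := by
    by_contra! h
    exact hB (funext h)
  refine Finset.sum_pos' (fun i _ => ?_) ⟨k, Finset.mem_univ k, ?_⟩
  · exact diag_eq i ▸ hQ.posSemidef.dotProduct_mulVec_nonneg _
  · exact diag_eq k ▸ hQ.dotProduct_mulVec_pos (star_ne_zero.mpr hk)

section CompleteSquare

variable [DecidableEq n] [CommRing α] [StarRing α] {R Q : Matrix n n α}

/-- `E‖h − A y‖²` for the linear estimator `A` when `E[h hᴴ] = E[h yᴴ] = R` and `E[y yᴴ] = Q`. -/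
def linearEstimatorMSE (R Q A : Matrix n n α) : α :=
  R.trace - (A * R).trace - (R * Aᴴ).trace + (A * Q * Aᴴ).trace

lemma mul_mul_conjTranspose_sub_eq (hR : R.IsHermitian) (hQ : Q.IsHermitian)
    (hQdet : IsUnit Q.det) (A : Matrix n n α) :
    A * Q * Aᴴ - A * R - R * Aᴴ
      = (A - R * Q⁻¹) * Q * (A - R * Q⁻¹)ᴴ - R * Q⁻¹ * R := by
  have conjTranspose_eq : (R * Q⁻¹)ᴴ = Q⁻¹ * R := by
    rw [conjTranspose_mul, hQ.inv.eq, hR.eq]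
  have mul_Q : R * Q⁻¹ * Q = R := by
    rw [Matrix.mul_assoc, nonsing_inv_mul Q hQdet, Matrix.mul_one]
  have Q_mul : Q * (Q⁻¹ * R) = R := by
    rw [← Matrix.mul_assoc, mul_nonsing_inv Q hQdet, Matrix.one_mul]
  rw [conjTranspose_sub, conjTranspose_eq, Matrix.sub_mul, Matrix.sub_mul, Matrix.mul_sub,
    Matrix.mul_sub, mul_Q, Matrix.mul_assoc A Q (Q⁻¹ * R), Q_mul, ← Matrix.mul_assoc R Q⁻¹ R]
  abel

lemma linearEstimatorMSE_eq (hR : R.IsHermitian) (hQ : Q.IsHermitian) (hQdet : IsUnit Q.det)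
    (A : Matrix n n α) :
    linearEstimatorMSE R Q A
      = (R - R * Q⁻¹ * R).trace + ((A - R * Q⁻¹) * Q * (A - R * Q⁻¹)ᴴ).trace := by
  have h := congrArg trace (mul_mul_conjTranspose_sub_eq hR hQ hQdet A)
  simp only [trace_sub] at h
  rw [linearEstimatorMSE, trace_sub]
  linear_combination h

lemma linearEstimatorMSE_mul_inv (hR : R.IsHermitian) (hQ : Q.IsHermitian)
    (hQdet : IsUnit Q.det) :
    linearEstimatorMSE R Q (R * Q⁻¹) = (R - R * Q⁻¹ * R).trace := by
  simp only [linearEstimatorMSE_eq hR hQ hQdet, sub_self, Matrix.zero_mul, trace_zero, add_zero]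

end CompleteSquare

end Matrix

/-- Matrix-algebra core of the MMSE estimator: for `R` Hermitian and `Q`
Hermitian positive definite, the function
`f(A) = tr(R) − tr(A R) − tr(R Aᴴ) + tr(A Q Aᴴ)` attains its minimum uniquely
at `A = R Q⁻¹`, with minimum value `tr(R − R Q⁻¹ R)`. -/
theorem mmse_matrix_minimization (N : ℕ) (R Q : Matrix (Fin N) (Fin N) ℂ)
    (hR : R.IsHermitian) (hQ : Q.PosDef) :
    (R.trace - (R * Q⁻¹ * R).trace - (R * (R * Q⁻¹)ᴴ).trace + (R * Q⁻¹ * Q * (R * Q⁻¹)ᴴ).trace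
        = (R - R * Q⁻¹ * R).trace) ∧
      ∀ A : Matrix (Fin N) (Fin N) ℂ, A ≠ R * Q⁻¹ →
        (R.trace - (R * Q⁻¹ * R).trace - (R * (R * Q⁻¹)ᴴ).trace
            + (R * Q⁻¹ * Q * (R * Q⁻¹)ᴴ).trace).re <
          (R.trace - (A * R).trace - (R * Aᴴ).trace + (A * Q * Aᴴ).trace).re := by
  have hQdet : IsUnit Q.det := hQ.det_pos.ne'.isUnit
  have min_eq := linearEstimatorMSE_mul_inv hR hQ.isHermitian hQdet
  refine ⟨min_eq, fun A hA => ?_⟩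
  have min_lt : linearEstimatorMSE R Q (R * Q⁻¹) < linearEstimatorMSE R Q A := by
    rw [min_eq, linearEstimatorMSE_eq hR hQ.isHermitian hQdet A]
    exact lt_add_of_pos_right _ (hQ.trace_mul_mul_conjTranspose_pos (sub_ne_zero.mpr hA))
  exact (Complex.lt_def.mp min_lt).1
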